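/- arXiv:2208.07600 — 3 statements merged into one kernel-verified Lean document; each statement's English description precedes it below -/
import Mathlib

section
/- Let Ω ⊂ ℝ^d be bounded open with Poincaré constant C_P (i.e., ‖φ‖_{L²(Ω)} ≤ C_P ‖∇φ‖_{L²(Ω)} for φ ∈ H¹₀(Ω)), let L > 0, κ, κ̄ > 0, and let B₁, B₂ ⊂ Ω have positive finite measure. Define a(φ,θ;ψ,δ) = ∫_Ω κ ∇φ·∇ψ dV + ∫₀^L κ̄ θ'δ' dx on V = H¹₀(Ω) × H¹(0,L). Then a is elliptic on ker B: there exists ᾱ > 0 such that a(φ,θ;φ,θ) ≥ ᾱ (‖φ‖²_{H¹(Ω)} + ‖θ‖²_{H¹(0,L)}) for all (φ,θ) with (1/|B₁|)∫_{B₁}φ = θ(0) and (1/|B₂|)∫_{B₂}φ = θ(L). -/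
/-!
The constraint at `0` says that `θ 0` is the average of `φ` over `B₁`, so Jensen's inequality
gives `θ 0 ^ 2 ≤ |B₁|⁻¹ ‖φ‖²_{L²(Ω)}`, which the Poincaré inequality bounds by a multiple of
`‖∇φ‖²`. On the wire, the fundamental theorem of calculus and Cauchy–Schwarz give
`θ x ^ 2 ≤ 2 θ 0 ^ 2 + 2 L ‖θ'‖²`, so `‖θ‖²_{L²(0,L)}` is controlled by `θ 0 ^ 2` and `‖θ'‖²`.
Together, the full `H¹ × H¹` norm is at most `c₁ ‖∇φ‖² + c₂ ‖θ'‖²`.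
-/

open MeasureTheory Set

section Jensen

variable {α : Type*} [MeasurableSpace α] {μ : Measure α} {f : α → ℝ} {s t : Set α}

theorem sq_setAverage_le_setAverage_sq (hs₀ : μ s ≠ 0) (hs : μ s ≠ ⊤)
    (hf : MemLp f 2 (μ.restrict s)) :
    (⨍ x in s, f x ∂μ) ^ 2 ≤ ⨍ x in s, f x ^ 2 ∂μ :=
  have : IsFiniteMeasure (μ.restrict s) := isFiniteMeasure_restrict.2 hs
  (even_two.convexOn_pow (𝕜 := ℝ)).map_set_average_le (continuous_pow 2).continuousOn
    isClosed_univ hs₀ hs (by simp) (hf.integrable one_le_two) hf.integrable_sq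

theorem sq_setIntegral_le_measureReal_mul_setIntegral_sq (hs : μ s ≠ ⊤)
    (hf : MemLp f 2 (μ.restrict s)) :
    (∫ x in s, f x ∂μ) ^ 2 ≤ μ.real s * ∫ x in s, f x ^ 2 ∂μ := by
  rcases eq_or_ne (μ s) 0 with hs₀ | hs₀
  · simp [Measure.restrict_eq_zero.2 hs₀]
  have hpos : 0 < μ.real s := ENNReal.toReal_pos hs₀ hs
  have h := sq_setAverage_le_setAverage_sq hs₀ hs hf
  rw [setAverage_eq, setAverage_eq, smul_eq_mul, smul_eq_mul, mul_pow] at h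
  have := mul_le_mul_of_nonneg_left h (sq_nonneg (μ.real s))
  field_simp at this
  nlinarith

theorem sq_setAverage_le_inv_measureReal_mul_setIntegral_sq (hst : s ⊆ t) (hs₀ : μ s ≠ 0)
    (hs : μ s ≠ ⊤) (hf : MemLp f 2 (μ.restrict t)) :
    (⨍ x in s, f x ∂μ) ^ 2 ≤ (μ.real s)⁻¹ * ∫ x in t, f x ^ 2 ∂μ :=
  calc (⨍ x in s, f x ∂μ) ^ 2 ≤ ⨍ x in s, f x ^ 2 ∂μ :=
        sq_setAverage_le_setAverage_sq hs₀ hs (hf.mono_measure (Measure.restrict_mono hst le_rfl))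
    _ = (μ.real s)⁻¹ * ∫ x in s, f x ^ 2 ∂μ := by rw [setAverage_eq, smul_eq_mul]
    _ ≤ (μ.real s)⁻¹ * ∫ x in t, f x ^ 2 ∂μ := by
        gcongr ?_ * ?_
        exact setIntegral_mono_set hf.integrable_sq (.of_forall fun x => sq_nonneg _)
          hst.eventuallyLE

end Jensen

section Interval

variable {f f' : ℝ → ℝ} {a b : ℝ}

theorem aestronglyMeasurable_restrict_of_hasDerivAt {μ : Measure ℝ} {s : Set ℝ}
    (hs : MeasurableSet s) (hf : ∀ x ∈ s, HasDerivAt f (f' x) x) :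
    AEStronglyMeasurable f' (μ.restrict s) :=
  (measurable_deriv f).aestronglyMeasurable.congr <|
    ae_restrict_of_forall_mem hs fun x hx => (hf x hx).deriv

theorem sq_sub_le_mul_integral_sq_deriv (hab : a ≤ b) (hf : ∀ x ∈ Icc a b, HasDerivAt f (f' x) x)
    (hf' : IntervalIntegrable (fun x => f' x ^ 2) volume a b) :
    (f b - f a) ^ 2 ≤ (b - a) * ∫ x in a..b, f' x ^ 2 := by
  have hL2 : MemLp f' 2 (volume.restrict (Ioc a b)) :=
    (memLp_two_iff_integrable_sq (aestronglyMeasurable_restrict_of_hasDerivAt measurableSet_Ioc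
      fun x hx => hf x (Ioc_subset_Icc_self hx))).2 hf'.1
  have : IsFiniteMeasure (volume.restrict (Ioc a b)) :=
    isFiniteMeasure_restrict.2 measure_Ioc_lt_top.ne
  have hFTC : ∫ x in a..b, f' x = f b - f a :=
    intervalIntegral.integral_eq_sub_of_hasDerivAt (by rwa [uIcc_of_le hab])
      ((intervalIntegrable_iff_integrableOn_Ioc_of_le hab).2 (hL2.integrable one_le_two))
  rw [← hFTC, intervalIntegral.integral_of_le hab, intervalIntegral.integral_of_le hab]
  simpa [Measure.real, hab] using
    sq_setIntegral_le_measureReal_mul_setIntegral_sq measure_Ioc_lt_top.ne hL2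

theorem sq_le_two_mul_sq_add_mul_integral_sq_deriv (hab : a ≤ b)
    (hf : ∀ x ∈ Icc a b, HasDerivAt f (f' x) x)
    (hf' : IntervalIntegrable (fun x => f' x ^ 2) volume a b) {x : ℝ} (hx : x ∈ Icc a b) :
    f x ^ 2 ≤ 2 * f a ^ 2 + 2 * (b - a) * ∫ t in a..b, f' t ^ 2 := by
  have hsub : uIcc a x ⊆ uIcc a b := uIcc_subset_uIcc_left (by rwa [uIcc_of_le hab])
  have hdiff : (f x - f a) ^ 2 ≤ (x - a) * ∫ t in a..x, f' t ^ 2 :=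
    sq_sub_le_mul_integral_sq_deriv hx.1 (fun t ht => hf t ⟨ht.1, ht.2.trans hx.2⟩)
      (hf'.mono_set hsub)
  have hmono : ∫ t in a..x, f' t ^ 2 ≤ ∫ t in a..b, f' t ^ 2 :=
    intervalIntegral.integral_mono_interval le_rfl hx.1 hx.2 (.of_forall fun t => sq_nonneg _) hf'
  have hnonneg : 0 ≤ ∫ t in a..x, f' t ^ 2 :=
    intervalIntegral.integral_nonneg hx.1 fun t _ => sq_nonneg _
  have : (x - a) * ∫ t in a..x, f' t ^ 2 ≤ (b - a) * ∫ t in a..b, f' t ^ 2 :=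
    mul_le_mul (by linarith [hx.2]) hmono hnonneg (by linarith)
  nlinarith [sq_nonneg (f x - 2 * f a)]

theorem intervalIntegral_sq_le_two_mul_sq_add_mul_integral_sq_deriv (hab : a ≤ b)
    (hf : ∀ x ∈ Icc a b, HasDerivAt f (f' x) x)
    (hf' : IntervalIntegrable (fun x => f' x ^ 2) volume a b) :
    ∫ x in a..b, f x ^ 2 ≤ 2 * (b - a) * f a ^ 2 + 2 * (b - a) ^ 2 * ∫ x in a..b, f' x ^ 2 := by
  have hcont : ContinuousOn f (uIcc a b) := fun x hx =>
    (hf x (by rwa [uIcc_of_le hab] at hx)).continuousAt.continuousWithinAt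
  calc ∫ x in a..b, f x ^ 2
      ≤ ∫ _ in a..b, (2 * f a ^ 2 + 2 * (b - a) * ∫ t in a..b, f' t ^ 2) :=
        intervalIntegral.integral_mono_on hab (hcont.pow 2).intervalIntegrable
          intervalIntegrable_const fun _ hx =>
            sq_le_two_mul_sq_add_mul_integral_sq_deriv hab hf hf' hx
    _ = 2 * (b - a) * f a ^ 2 + 2 * (b - a) ^ 2 * ∫ x in a..b, f' x ^ 2 := by
        rw [intervalIntegral.integral_const, smul_eq_mul]; ring

end Interval

theorem ellipticity_on_kernel_general (d : ℕ) (Ω B₁ B₂ : Set (EuclideanSpace ℝ (Fin d)))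
    (hB₁Ω : B₁ ⊆ Ω) (hB₁0 : 0 < volume B₁) (hB₁f : volume B₁ < ⊤)
    (L κ κb CP : ℝ) (hL : 0 < L) (hκ : 0 < κ) (hκb : 0 < κb) :
    ∃ α : ℝ, 0 < α ∧
      ∀ (φ : EuclideanSpace ℝ (Fin d) → ℝ) (θ θ' : ℝ → ℝ),
        -- φ ∈ H¹₀(Ω), with the Poincaré inequality (constant CP)
        MemLp φ 2 (volume.restrict Ω) →
        MemLp (fun x => ‖gradient φ x‖) 2 (volume.restrict Ω) →
        Real.sqrt (∫ x in Ω, (φ x) ^ 2) ≤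
            CP * Real.sqrt (∫ x in Ω, ‖gradient φ x‖ ^ 2) →
        -- θ ∈ H¹(0,L)
        (∀ x ∈ Set.Icc (0:ℝ) L, HasDerivAt θ (θ' x) x) →
        IntervalIntegrable (fun x => (θ' x) ^ 2) volume 0 L →
        -- (φ,θ) ∈ ker B
        (((volume B₁).toReal)⁻¹ * ∫ x in B₁, φ x) = θ 0 →
        (((volume B₂).toReal)⁻¹ * ∫ x in B₂, φ x) = θ L →
        κ * (∫ x in Ω, ‖gradient φ x‖ ^ 2) + κb * (∫ x in (0:ℝ)..L, (θ' x) ^ 2) ≥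
          α * (((∫ x in Ω, (φ x) ^ 2) + ∫ x in Ω, ‖gradient φ x‖ ^ 2) +
                ((∫ x in (0:ℝ)..L, (θ x) ^ 2) + ∫ x in (0:ℝ)..L, (θ' x) ^ 2)) := by
  set v := volume.real B₁
  set c₁ := 1 + CP ^ 2 + 2 * L * v⁻¹ * CP ^ 2
  set c₂ := 1 + 2 * L ^ 2
  have hc₁ : 0 < c₁ := by positivity
  have hc₂ : 0 < c₂ := by positivity
  obtain ⟨α, hα, hαc₁, hαc₂⟩ : ∃ α : ℝ, 0 < α ∧ α * c₁ ≤ κ ∧ α * c₂ ≤ κb :=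
    ⟨min (κ / c₁) (κb / c₂), by positivity, (le_div_iff₀ hc₁).1 (min_le_left _ _),
      (le_div_iff₀ hc₂).1 (min_le_right _ _)⟩
  refine ⟨α, hα, fun φ θ θ' hφ _ hPoincare hθ hθ' hθ₀ _ => ?_⟩
  set P := ∫ x in Ω, φ x ^ 2
  set G := ∫ x in Ω, ‖gradient φ x‖ ^ 2
  set T := ∫ x in (0:ℝ)..L, θ x ^ 2
  set D := ∫ x in (0:ℝ)..L, θ' x ^ 2
  have hG : 0 ≤ G := integral_nonneg fun x => sq_nonneg _
  have hD : 0 ≤ D := intervalIntegral.integral_nonneg hL.le fun x _ => sq_nonneg _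
  have hPG : P ≤ CP ^ 2 * G := by
    simpa [mul_pow, Real.sq_sqrt hG] using (Real.sqrt_le_iff.1 hPoincare).2
  have hθ₀P : θ 0 ^ 2 ≤ v⁻¹ * P := by
    rw [← hθ₀, ← measureReal_def, ← smul_eq_mul, ← setAverage_eq]
    exact sq_setAverage_le_inv_measureReal_mul_setIntegral_sq hB₁Ω hB₁0.ne' hB₁f.ne hφ
  have hTD : T ≤ 2 * L * θ 0 ^ 2 + 2 * L ^ 2 * D := by
    simpa using intervalIntegral_sq_le_two_mul_sq_add_mul_integral_sq_deriv hL.le hθ hθ'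
  have hvP : v⁻¹ * P ≤ v⁻¹ * (CP ^ 2 * G) := by gcongr
  have hsum : P + G + (T + D) ≤ c₁ * G + c₂ * D := by nlinarith
  calc α * (P + G + (T + D)) ≤ α * (c₁ * G + c₂ * D) := by gcongr
    _ = α * c₁ * G + α * c₂ * D := by ring
    _ ≤ κ * G + κb * D := by gcongr

/-- Ellipticity of a(φ,θ;φ,θ) = ∫_Ω κ|∇φ|² + ∫₀^L κ̄|θ'|² on the kernel of the
constraint operator B (pairs whose region averages match the wire endpoint
values): a(φ,θ;φ,θ) ≥ ᾱ(‖φ‖²_{H¹(Ω)} + ‖θ‖²_{H¹(0,L)}). -/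
theorem ellipticity_on_kernel (d : ℕ) (Ω B₁ B₂ : Set (EuclideanSpace ℝ (Fin d)))
    (hΩo : IsOpen Ω) (hΩb : Bornology.IsBounded Ω)
    (hB₁Ω : B₁ ⊆ Ω) (hB₂Ω : B₂ ⊆ Ω)
    (hB₁m : MeasurableSet B₁) (hB₂m : MeasurableSet B₂)
    (hB₁0 : 0 < volume B₁) (hB₂0 : 0 < volume B₂)
    (hB₁f : volume B₁ < ⊤) (hB₂f : volume B₂ < ⊤)
    (L κ κb CP : ℝ) (hL : 0 < L) (hκ : 0 < κ) (hκb : 0 < κb) (hCP : 0 < CP) :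
    ∃ α : ℝ, 0 < α ∧
      ∀ (φ : EuclideanSpace ℝ (Fin d) → ℝ) (θ θ' : ℝ → ℝ),
        -- φ ∈ H¹₀(Ω), with the Poincaré inequality (constant CP)
        MemLp φ 2 (volume.restrict Ω) →
        MemLp (fun x => ‖gradient φ x‖) 2 (volume.restrict Ω) →
        Real.sqrt (∫ x in Ω, (φ x) ^ 2) ≤
            CP * Real.sqrt (∫ x in Ω, ‖gradient φ x‖ ^ 2) →
        -- θ ∈ H¹(0,L)
        (∀ x ∈ Set.Icc (0:ℝ) L, HasDerivAt θ (θ' x) x) →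
        IntervalIntegrable (fun x => (θ' x) ^ 2) volume 0 L →
        -- (φ,θ) ∈ ker B
        (((volume B₁).toReal)⁻¹ * ∫ x in B₁, φ x) = θ 0 →
        (((volume B₂).toReal)⁻¹ * ∫ x in B₂, φ x) = θ L →
        κ * (∫ x in Ω, ‖gradient φ x‖ ^ 2) + κb * (∫ x in (0:ℝ)..L, (θ' x) ^ 2) ≥
          α * (((∫ x in Ω, (φ x) ^ 2) + ∫ x in Ω, ‖gradient φ x‖ ^ 2) +
                ((∫ x in (0:ℝ)..L, (θ x) ^ 2) + ∫ x in (0:ℝ)..L, (θ' x) ^ 2)) :=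
  ellipticity_on_kernel_general d Ω B₁ B₂ hB₁Ω hB₁0 hB₁f L κ κb CP hL hκ hκb
end

section
/- Let V be a Hilbert space, Q = ℝⁿ, a : V × V → ℝ a bounded symmetric bilinear form, b : V × Q → ℝ a bounded bilinear form with associated operator B : V → Q, and f ∈ V'. If a is coercive on ker B and B is surjective, then the saddle-point problem — find (u, λ) ∈ V × Q with a(u,v) + b(v,λ) = f(v) for all v ∈ V and b(u,Γ) = 0 for all Γ ∈ Q — has a unique solution. -/
open scoped InnerProductSpace

/-!
Lax–Milgram on the closed subspace `ker B` gives `u ∈ ker B` with `a(u, v) = f(v)` for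
`v ∈ ker B`. The residual `f - a(u, ·)` then vanishes on `ker B`, so it factors through `B`
and, `ℝⁿ` being finite-dimensional, is represented as `v ↦ ⟪B v, λ⟫`. For uniqueness, the
difference of two solutions `(w, μ)` has `w ∈ ker B`, so testing with `v = w` gives
`a(w, w) = 0` and coercivity forces `w = 0`; then `⟪B v, μ⟫ = 0` for all `v`, and
surjectivity of `B` forces `μ = 0`.
-/

section

variable {V F : Type*} [NormedAddCommGroup V] [InnerProductSpace ℝ V]
  [NormedAddCommGroup F] [InnerProductSpace ℝ F]

theorem IsCoercive.exists_forall_apply_eq [CompleteSpace V] {A : V →L[ℝ] V →L[ℝ] ℝ}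
    (hA : IsCoercive A) (f : V →L[ℝ] ℝ) : ∃ u, ∀ v, A u v = f v := by
  refine ⟨hA.continuousLinearEquivOfBilin.symm ((InnerProductSpace.toDual ℝ V).symm f),
    fun v => ?_⟩
  rw [← hA.continuousLinearEquivOfBilin_apply, ContinuousLinearEquiv.apply_symm_apply,
    InnerProductSpace.toDual_symm_apply]

theorem exists_mem_forall_mem_apply_eq_of_coercive_on (K : Submodule ℝ V) [CompleteSpace K]
    (A : V →L[ℝ] V →L[ℝ] ℝ) {α : ℝ} (hα : 0 < α) (hcoer : ∀ v ∈ K, α * ‖v‖ ^ 2 ≤ A v v)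
    (f : V →L[ℝ] ℝ) : ∃ u ∈ K, ∀ v ∈ K, A u v = f v := by
  set AK : K →L[ℝ] K →L[ℝ] ℝ := ((A.comp K.subtypeL).flip.comp K.subtypeL).flip
  have hAK : IsCoercive AK := ⟨α, hα, fun u => by
    simpa [AK, pow_two, mul_assoc] using hcoer u u.2⟩
  obtain ⟨u, hu⟩ := hAK.exists_forall_apply_eq (f.comp K.subtypeL)
  exact ⟨u, u.2, fun v hv => hu ⟨v, hv⟩⟩

theorem exists_forall_inner_eq_of_ker_le [FiniteDimensional ℝ F] (B : V →L[ℝ] F)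
    (g : V →L[ℝ] ℝ) (hg : ∀ v, B v = 0 → g v = 0) : ∃ μ : F, ∀ v, ⟪B v, μ⟫_ℝ = g v := by
  have hmem : (g : V →ₗ[ℝ] ℝ) ∈ (LinearMap.ker (B : V →ₗ[ℝ] F)).dualAnnihilator :=
    (Submodule.mem_dualAnnihilator _).2 hg
  rw [← LinearMap.range_dualMap_eq_dualAnnihilator_ker] at hmem
  obtain ⟨φ, hφ⟩ := hmem
  refine ⟨(InnerProductSpace.toDual ℝ F).symm (LinearMap.toContinuousLinearMap φ), fun v => ?_⟩
  rw [real_inner_comm, InnerProductSpace.toDual_symm_apply]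
  exact LinearMap.congr_fun hφ v

theorem eq_zero_of_forall_inner_apply_eq_zero {B : V →L[ℝ] F} (hB : Function.Surjective B)
    {μ : F} (h : ∀ v, ⟪B v, μ⟫_ℝ = 0) : μ = 0 := by
  obtain ⟨v, hv⟩ := hB μ
  simpa [hv] using h v

theorem saddle_point_homogeneous_eq_zero {A : V →L[ℝ] V →L[ℝ] ℝ} {B : V →L[ℝ] F} {α : ℝ}
    (hα : 0 < α) (hcoer : ∀ v, B v = 0 → α * ‖v‖ ^ 2 ≤ A v v) (hB : Function.Surjective B)
    {w : V} {μ : F} (hw : B w = 0) (h : ∀ v, A w v + ⟪B v, μ⟫_ℝ = 0) : w = 0 ∧ μ = 0 := by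
  have hAw : A w w = 0 := by simpa [hw] using h w
  have hw0 : w = 0 := by
    have hle : α * ‖w‖ ^ 2 ≤ 0 := hAw ▸ hcoer w hw
    have : ‖w‖ ^ 2 = 0 := le_antisymm (nonpos_of_mul_nonpos_right hle hα) (sq_nonneg _)
    simpa using this
  exact ⟨hw0, eq_zero_of_forall_inner_apply_eq_zero hB fun v => by simpa [hw0] using h v⟩

end

theorem saddle_point_wellposed_general {V : Type*} [NormedAddCommGroup V]
    [InnerProductSpace ℝ V] [CompleteSpace V] (n : ℕ)
    (A : V →L[ℝ] V →L[ℝ] ℝ)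
    (B : V →L[ℝ] EuclideanSpace ℝ (Fin n))
    (f : V →L[ℝ] ℝ)
    (α : ℝ) (hα : 0 < α)
    (hcoer : ∀ v : V, B v = 0 → α * ‖v‖ ^ 2 ≤ A v v)
    (hsurj : Function.Surjective B) :
    ∃! p : V × EuclideanSpace ℝ (Fin n),
      (∀ v : V, A p.1 v + ⟪B v, p.2⟫_ℝ = f v) ∧
      (∀ Γ : EuclideanSpace ℝ (Fin n), ⟪B p.1, Γ⟫_ℝ = 0) := by
  have : CompleteSpace (LinearMap.ker (B : V →ₗ[ℝ] EuclideanSpace ℝ (Fin n))) :=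
    B.isClosed_ker.completeSpace_coe
  obtain ⟨u, hBu, hu⟩ := exists_mem_forall_mem_apply_eq_of_coercive_on (LinearMap.ker _) A hα
    (fun v hv => hcoer v hv) f
  replace hBu : B u = 0 := hBu
  obtain ⟨μ, hμ⟩ := exists_forall_inner_eq_of_ker_le B (f - A u) fun v hv => by
    simpa [sub_eq_zero] using (hu v hv).symm
  have hsol : ∀ v, A u v + ⟪B v, μ⟫_ℝ = f v := fun v => by simp [hμ]
  refine ⟨(u, μ), ⟨hsol, fun Γ => by simp [hBu]⟩, ?_⟩
  rintro ⟨u', μ'⟩ ⟨hsol', horth'⟩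
  have hBu' : B u' = 0 := inner_self_eq_zero.1 (horth' (B u'))
  obtain ⟨hw, hμ'⟩ := saddle_point_homogeneous_eq_zero hα hcoer hsurj (w := u' - u) (μ := μ' - μ)
    (by simp [hBu', hBu]) fun v => by
      simp only [map_sub, sub_apply, inner_sub_right]
      linarith [hsol v, hsol' v]
  simp [sub_eq_zero.1 hw, sub_eq_zero.1 hμ']

/-- Well-posedness of the abstract saddle-point problem: if the bounded
symmetric bilinear form a is coercive on ker B and B : V → ℝⁿ is surjective,
then there is a unique (u, λ) with a(u,v) + ⟨Bv,λ⟩ = f(v) for all v and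
⟨Bu,Γ⟩ = 0 for all Γ. -/
theorem saddle_point_wellposed {V : Type*} [NormedAddCommGroup V]
    [InnerProductSpace ℝ V] [CompleteSpace V] (n : ℕ)
    (A : V →L[ℝ] V →L[ℝ] ℝ)
    (B : V →L[ℝ] EuclideanSpace ℝ (Fin n))
    (f : V →L[ℝ] ℝ)
    (hsymm : ∀ u v : V, A u v = A v u)
    (α : ℝ) (hα : 0 < α)
    (hcoer : ∀ v : V, B v = 0 → α * ‖v‖ ^ 2 ≤ A v v)
    (hsurj : Function.Surjective B) :
    ∃! p : V × EuclideanSpace ℝ (Fin n),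
      (∀ v : V, A p.1 v + ⟪B v, p.2⟫_ℝ = f v) ∧
      (∀ Γ : EuclideanSpace ℝ (Fin n), ⟪B p.1, Γ⟫_ℝ = 0) :=
  saddle_point_wellposed_general n A B f α hα hcoer hsurj
end

section
/- Let V be a Hilbert space, Q = ℝⁿ, with bounded bilinear forms a : V × V → ℝ (coercive on ker B with constant α) and b : V × Q → ℝ satisfying the inf-sup condition with constant β. Let (u,λ) solve the continuous saddle-point problem and (u_h, λ_h) solve the Galerkin problem on a closed subspace V_h ⊂ V with Q_h = Q, where B|_{V_h} is surjective. Then there is a constant c, depending only on ‖a‖, ‖b‖, α, β, such that ‖u − u_h‖_V + ‖λ − λ_h‖_Q ≤ c (inf_{v_h ∈ V_h} ‖u − v_h‖_V). -/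
open scoped InnerProductSpace


private lemma galerkin_aux_preimage {V : Type*} [NormedAddCommGroup V]
    [InnerProductSpace ℝ V] [CompleteSpace V] {n : ℕ}
    (B : V →L[ℝ] EuclideanSpace ℝ (Fin n)) (Vh : Submodule ℝ V)
    (hVc : CompleteSpace Vh) {β : ℝ} (hβ : 0 < β)
    (hdis : ∀ lam : EuclideanSpace ℝ (Fin n),
      β * ‖lam‖ ≤ ⨆ v : {v : Vh // (v : V) ≠ 0},
        ⟪B (v.1 : V), lam⟫_ℝ / ‖(v.1 : V)‖) :
    ∀ q : EuclideanSpace ℝ (Fin n), ∃ w : Vh, B (w : V) = q ∧ β * ‖w‖ ≤ ‖q‖ := by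
  haveI := hVc
  set T : Vh →L[ℝ] EuclideanSpace ℝ (Fin n) := B.comp (Vh.subtypeL) with hT
  set S := ContinuousLinearMap.adjoint T with hS
  have hadj : ∀ q : EuclideanSpace ℝ (Fin n), β * ‖q‖ ≤ ‖S q‖ := by
    intro q
    refine le_trans (hdis q) (Real.iSup_le ?_ (norm_nonneg _))
    rintro ⟨v, hv⟩
    have hvpos : (0:ℝ) < ‖(v : V)‖ := by simpa [norm_pos_iff] using hv
    rw [div_le_iff₀ hvpos]
    have h1 : ⟪B (v : V), q⟫_ℝ = ⟪v, S q⟫_ℝ := by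
      rw [hS, ContinuousLinearMap.adjoint_inner_right]; rfl
    have h2 : ‖(v : V)‖ = ‖v‖ := rfl
    rw [h1, h2]
    calc ⟪v, S q⟫_ℝ ≤ ‖v‖ * ‖S q‖ := real_inner_le_norm _ _
      _ = ‖S q‖ * ‖v‖ := mul_comm _ _
  have hTS : ∀ q : EuclideanSpace ℝ (Fin n), ⟪T (S q), q⟫_ℝ = ‖S q‖ ^ 2 := by
    intro q
    rw [← real_inner_self_eq_norm_sq (S q)]
    rw [hS, ContinuousLinearMap.adjoint_inner_right]
  set M : EuclideanSpace ℝ (Fin n) →L[ℝ] EuclideanSpace ℝ (Fin n) := T.comp S with hM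
  have hMq : ∀ q, M q = T (S q) := fun q => rfl
  have hinj : Function.Injective M := by
    intro p p' hpp
    have h0 : M (p - p') = 0 := by rw [map_sub, hpp, sub_self]
    have h1 : ‖S (p - p')‖ ^ 2 = 0 := by rw [← hTS (p - p'), ← hMq, h0, inner_zero_left]
    have h2 := hadj (p - p')
    have h4 : ‖S (p - p')‖ = 0 := pow_eq_zero_iff two_ne_zero |>.mp h1
    have h5 : ‖p - p'‖ ≤ 0 := by
      have h6 : β * ‖p - p'‖ ≤ β * 0 := by rw [mul_zero, ← h4]; exact h2
      exact le_of_mul_le_mul_left h6 hβ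
    exact sub_eq_zero.mp (norm_le_zero_iff.mp h5)
  have hsurjM : Function.Surjective M :=
    LinearMap.injective_iff_surjective
      (f := (M : EuclideanSpace ℝ (Fin n) →ₗ[ℝ] EuclideanSpace ℝ (Fin n))) |>.mp hinj
  have keyr : ∀ a b z' : ℝ, 0 ≤ a → 0 ≤ b → β * z' ≤ a → a ^ 2 ≤ b * z' → β * a ≤ b := by
    intro a b z' ha hb h1 h2
    rcases eq_or_lt_of_le ha with h | h
    · rw [← h, mul_zero]; exact hb
    · have h3 : β * a * a ≤ b * a := by nlinarith
      exact le_of_mul_le_mul_right h3 h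
  intro q
  obtain ⟨z, hz⟩ := hsurjM q
  refine ⟨S z, hz, ?_⟩
  have h2 := hadj z
  have hiq : ⟪q, z⟫_ℝ = ‖S z‖ ^ 2 := by rw [← hz, hMq]; exact hTS z
  have hcs : ⟪q, z⟫_ℝ ≤ ‖q‖ * ‖z‖ := real_inner_le_norm _ _
  exact keyr ‖S z‖ ‖q‖ ‖z‖ (norm_nonneg _) (norm_nonneg _) h2 (by rw [← hiq]; exact hcs)

/-- Brezzi quasi-optimality estimate with exactly represented multiplier
space (Q_h = Q = ℝⁿ): if a is coercive on ker B with constant α and b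
satisfies the (continuous and discrete) inf-sup condition with constant β,
then there is a constant c, depending only on ‖a‖, ‖b‖, α, β, such that
‖u − u_h‖ + ‖λ − λ_h‖ ≤ c · inf_{v_h ∈ V_h} ‖u − v_h‖. -/
theorem galerkin_error_estimate {V : Type*} [NormedAddCommGroup V]
    [InnerProductSpace ℝ V] [CompleteSpace V] (n : ℕ)
    (A : V →L[ℝ] V →L[ℝ] ℝ)
    (B : V →L[ℝ] EuclideanSpace ℝ (Fin n))
    (α β : ℝ) (hα : 0 < α) (hβ : 0 < β)
    (hcoerker : ∀ v : V, B v = 0 → α * ‖v‖ ^ 2 ≤ A v v)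
    (hinfsup : ∀ lam : EuclideanSpace ℝ (Fin n),
      β * ‖lam‖ ≤ ⨆ v : {v : V // v ≠ 0}, ⟪B v.1, lam⟫_ℝ / ‖v.1‖) :
    ∃ c : ℝ, 0 < c ∧
      ∀ (Vh : Submodule ℝ V), IsClosed (Vh : Set V) →
        Function.Surjective (fun v : Vh => B v) →
        -- discrete inf-sup with the same constant β
        (∀ lam : EuclideanSpace ℝ (Fin n),
          β * ‖lam‖ ≤ ⨆ v : {v : Vh // (v : V) ≠ 0},
            ⟪B (v.1 : V), lam⟫_ℝ / ‖(v.1 : V)‖) →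
        ∀ (f : V →L[ℝ] ℝ) (u uh : V) (lam lamh : EuclideanSpace ℝ (Fin n)),
          uh ∈ Vh →
          -- continuous saddle-point problem
          (∀ v : V, A u v + ⟪B v, lam⟫_ℝ = f v) →
          (∀ Γ : EuclideanSpace ℝ (Fin n), ⟪B u, Γ⟫_ℝ = 0) →
          -- discrete (Galerkin) problem on V_h × Q
          (∀ v ∈ Vh, A uh v + ⟪B v, lamh⟫_ℝ = f v) →
          (∀ Γ : EuclideanSpace ℝ (Fin n), ⟪B uh, Γ⟫_ℝ = 0) →
          ‖u - uh‖ + ‖lam - lamh‖ ≤ c * ⨅ v : Vh, ‖u - (v : V)‖ := by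
  set c : ℝ := (1 + ‖A‖ / β) * ((1 + ‖A‖ / α) * (1 + ‖B‖ / β)) with hcdef
  have hc0 : 0 < c := by positivity
  refine ⟨c, hc0, ?_⟩
  intro Vh hclosed hsurj hdis f u uh lam lamh huh hcont hBu hdisc hBuh
  haveI : CompleteSpace Vh := hclosed.completeSpace_coe
  -- B u = 0 and B uh = 0
  have hBu0 : B u = 0 := by
    have h := hBu (B u); rwa [inner_self_eq_zero] at h
  have hBuh0 : B uh = 0 := by
    have h := hBuh (B uh); rwa [inner_self_eq_zero] at h
  -- error equation
  have herr : ∀ v ∈ Vh, A (u - uh) v = ⟪B v, lamh - lam⟫_ℝ := by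
    intro v hv
    have h1 := hcont v
    have h2 := hdisc v hv
    have h3 : A u v + ⟪B v, lam⟫_ℝ = A uh v + ⟪B v, lamh⟫_ℝ := by rw [h1, h2]
    simp only [map_sub, ContinuousLinearMap.sub_apply, inner_sub_right]
    linarith
  -- multiplier estimate
  have hlam : β * ‖lam - lamh‖ ≤ ‖A‖ * ‖u - uh‖ := by
    refine le_trans (hdis (lam - lamh)) (Real.iSup_le ?_ (by positivity))
    rintro ⟨v, hv⟩
    have hvpos : (0:ℝ) < ‖(v : V)‖ := by simpa [norm_pos_iff] using hv
    rw [div_le_iff₀ hvpos]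
    have h1 : ⟪B (v : V), lam - lamh⟫_ℝ = -(A (u - uh) (v : V)) := by
      rw [herr _ v.2, inner_sub_right, inner_sub_right]; ring
    rw [h1]
    calc -(A (u - uh) (v : V)) ≤ ‖A (u - uh) (v : V)‖ := by
          rw [Real.norm_eq_abs]; exact neg_le_abs _
      _ ≤ ‖A‖ * ‖u - uh‖ * ‖(v : V)‖ := A.le_opNorm₂ _ _
  have hlam2 : ‖lam - lamh‖ ≤ ‖A‖ / β * ‖u - uh‖ := by
    rw [div_mul_eq_mul_div, le_div_iff₀ hβ]
    linarith [hlam, mul_comm β ‖lam - lamh‖]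
  -- bounded right inverse of B on Vh
  have hpre : ∀ q : EuclideanSpace ℝ (Fin n), ∃ w : Vh, B (w : V) = q ∧ β * ‖w‖ ≤ ‖q‖ :=
    galerkin_aux_preimage B Vh ‹CompleteSpace Vh› hβ hdis
  -- quasi-optimality for each vh
  have key : ∀ v : Vh, ‖u - uh‖ + ‖lam - lamh‖ ≤ c * ‖u - (v : V)‖ := by
    intro v
    obtain ⟨w, hwB, hwn⟩ := hpre (B (u - (v : V)))
    have hqn : ‖B (u - (v : V))‖ ≤ ‖B‖ * ‖u - (v : V)‖ := B.le_opNorm _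
    have hwn' : ‖(w : V)‖ ≤ ‖B‖ / β * ‖u - (v : V)‖ := by
      have hco : ‖(w : V)‖ = ‖w‖ := rfl
      rw [hco, div_mul_eq_mul_div, le_div_iff₀ hβ]
      linarith [hwn, hqn, mul_comm β ‖w‖]
    set z : V := (v : V) + (w : V) with hz
    have hzmem : z ∈ Vh := Vh.add_mem v.2 w.2
    have hBz : B z = 0 := by
      rw [hz, map_add, hwB, map_sub, hBu0]; abel
    have he_mem : uh - z ∈ Vh := Vh.sub_mem huh hzmem
    have hBe : B (uh - z) = 0 := by rw [map_sub, hBuh0, hBz, sub_zero]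
    have horth : A (u - uh) (uh - z) = 0 := by
      rw [herr _ he_mem, hBe, inner_zero_left]
    have hco := hcoerker (uh - z) hBe
    have hAsplit : A (uh - z) (uh - z) = A (u - z) (uh - z) - A (u - uh) (uh - z) := by
      have h : A (uh - z) = A (u - z) - A (u - uh) := by
        rw [← map_sub]; congr 1; abel
      rw [h, ContinuousLinearMap.sub_apply]
    have habs : A (u - z) (uh - z) ≤ ‖A‖ * ‖u - z‖ * ‖uh - z‖ :=
      le_trans (le_abs_self _) (by rw [← Real.norm_eq_abs]; exact A.le_opNorm₂ _ _)
    have hbound : α * ‖uh - z‖ ^ 2 ≤ ‖A‖ * ‖u - z‖ * ‖uh - z‖ := by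
      calc α * ‖uh - z‖ ^ 2 ≤ A (uh - z) (uh - z) := hco
        _ = A (u - z) (uh - z) := by rw [hAsplit, horth, sub_zero]
        _ ≤ ‖A‖ * ‖u - z‖ * ‖uh - z‖ := habs
    have hEst : ‖uh - z‖ ≤ ‖A‖ / α * ‖u - z‖ := by
      rcases eq_or_lt_of_le (norm_nonneg (uh - z)) with h | h
      · rw [← h]; positivity
      · have h2 : (α * ‖uh - z‖) * ‖uh - z‖ ≤ (‖A‖ * ‖u - z‖) * ‖uh - z‖ := by
          nlinarith [hbound]
        have h3 := le_of_mul_le_mul_right h2 h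
        rw [div_mul_eq_mul_div, le_div_iff₀ hα]
        linarith [h3, mul_comm α ‖uh - z‖]
    have tri1 : ‖u - uh‖ ≤ ‖u - z‖ + ‖uh - z‖ := by
      have h : u - uh = (u - z) - (uh - z) := by abel
      rw [h]; exact norm_sub_le _ _
    have tri2 : ‖u - z‖ ≤ ‖u - (v : V)‖ + ‖(w : V)‖ := by
      have h : u - z = (u - (v : V)) - (w : V) := by rw [hz]; abel
      rw [h]; exact norm_sub_le _ _
    have s1 : ‖u - z‖ ≤ (1 + ‖B‖ / β) * ‖u - (v : V)‖ := by
      have : (1 + ‖B‖ / β) * ‖u - (v : V)‖ = ‖u - (v : V)‖ + ‖B‖ / β * ‖u - (v : V)‖ := by ring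
      rw [this]; linarith [tri2, hwn']
    have s2 : ‖uh - z‖ ≤ ‖A‖ / α * ((1 + ‖B‖ / β) * ‖u - (v : V)‖) :=
      le_trans hEst (mul_le_mul_of_nonneg_left s1 (by positivity))
    have s3 : ‖u - uh‖ ≤ (1 + ‖A‖ / α) * ((1 + ‖B‖ / β) * ‖u - (v : V)‖) := by
      have h : (1 + ‖A‖ / α) * ((1 + ‖B‖ / β) * ‖u - (v : V)‖)
          = (1 + ‖B‖ / β) * ‖u - (v : V)‖ + ‖A‖ / α * ((1 + ‖B‖ / β) * ‖u - (v : V)‖) := by ring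
      rw [h]; linarith [tri1, s1, s2]
    have s4 : ‖lam - lamh‖ ≤ ‖A‖ / β * ((1 + ‖A‖ / α) * ((1 + ‖B‖ / β) * ‖u - (v : V)‖)) :=
      le_trans hlam2 (mul_le_mul_of_nonneg_left s3 (by positivity))
    have hfin : c * ‖u - (v : V)‖
        = (1 + ‖A‖ / α) * ((1 + ‖B‖ / β) * ‖u - (v : V)‖)
          + ‖A‖ / β * ((1 + ‖A‖ / α) * ((1 + ‖B‖ / β) * ‖u - (v : V)‖)) := by
      rw [hcdef]; ring
    rw [hfin]; linarith [s3, s4]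
  -- pass to the infimum
  haveI : Nonempty Vh := ⟨0⟩
  have hinf : (‖u - uh‖ + ‖lam - lamh‖) / c ≤ ⨅ v : Vh, ‖u - (v : V)‖ := by
    refine le_ciInf fun v => ?_
    rw [div_le_iff₀ hc0]
    linarith [key v, mul_comm c ‖u - (v : V)‖]
  exact (div_le_iff₀' hc0).mp hinf
end
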